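/- Let 0<α₀<α₁<α₂ and take parameters (α₀,α₁,α₂,α₃)=(α₀,α₁,α₂,α₂). Define J=x₂y₃−x₃y₂ and G=y₂²+y₃²+(x₀y₂−x₂y₀)²/(α₂−α₀)+(x₀y₃−x₃y₀)²/(α₂−α₀)+(x₁y₂−x₂y₁)²/(α₂−α₁)+(x₁y₃−x₃y₁)²/(α₂−α₁). Then for every point (x,y)∈ℝ⁴×ℝ⁴ with C₁(x)=0 and C₂(x,y)=0, the Dirac brackets {H,J}, {H,G} and {J,G} all vanish at (x,y), where H=½(y₀²+y₁²+y₂²+y₃²). -/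

import Mathlib

/-!
Expanding the Dirac bracket, `{f,g}` is the canonical bracket minus correction terms each of which
carries a factor `df(0, x/α)` or `dg(0, x/α)`, i.e. `½{C₁,f}` or `½{C₁,g}`. So it suffices that the
canonical brackets of `H, J, G` vanish and that each of them is annihilated by `(0, x/α)`.

Canonically, `H` generates free motion, along which every `xᵢyⱼ − xⱼyᵢ` is constant, and `J`
generates simultaneous rotations of `(x₂,x₃)` and `(y₂,y₃)`, under which `G` is invariant. Along
`(0, x/α)` one finds `dH = C₂`, `dJ = 0` because `α₂ = α₃`, and
`dG = 2((x₂² + x₃²) C₂ − (x₂y₂ + x₃y₃) C₁)/α₂`, which vanish on the constraint set.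
-/

noncomputable section

/-- Points of `T*ℝⁿ = ℝⁿ × ℝⁿ`, written `(x, y)`. -/
abbrev Pt (n : ℕ) := (Fin n → ℝ) × (Fin n → ℝ)

/-- `D(x) = Σᵢ xᵢ²/αᵢ²`. -/
def Dq {n : ℕ} (α : Fin n → ℝ) (x : Fin n → ℝ) : ℝ := ∑ i, (x i)^2 / (α i)^2

/-- Partial derivative of `f` in the direction `xᵢ`. -/
def pdx {n : ℕ} (f : Pt n → ℝ) (p : Pt n) (i : Fin n) : ℝ :=
  fderiv ℝ f p (Pi.single i 1, 0)

/-- Partial derivative of `f` in the direction `yᵢ`. -/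
def pdy {n : ℕ} (f : Pt n → ℝ) (p : Pt n) (i : Fin n) : ℝ :=
  fderiv ℝ f p (0, Pi.single i 1)

/-- The Dirac bracket on `T*ℝⁿ` for the ellipsoid with semi-axes `√(αᵢ)`:
`{f,g} = Σᵢₖ (∂f/∂xᵢ ∂g/∂yₖ − ∂g/∂xᵢ ∂f/∂yₖ)(δᵢₖ − xᵢxₖ/(D αᵢ αₖ))
        − Σᵢₖ (∂f/∂yᵢ)(∂g/∂yₖ)(xᵢyₖ − xₖyᵢ)/(D αᵢ αₖ)`. -/
def dirac {n : ℕ} (α : Fin n → ℝ) (f g : Pt n → ℝ) (p : Pt n) : ℝ :=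
  (∑ i, ∑ k,
    (pdx f p i * pdy g p k - pdx g p i * pdy f p k) *
      ((if i = k then (1:ℝ) else 0) - p.1 i * p.1 k / (Dq α p.1 * α i * α k)))
  - ∑ i, ∑ k,
      pdy f p i * pdy g p k * (p.1 i * p.2 k - p.1 k * p.2 i) / (Dq α p.1 * α i * α k)

/-- The constraint `C₁(x) = Σᵢ xᵢ²/αᵢ − 1`. -/
def C1 {n : ℕ} (α : Fin n → ℝ) (x : Fin n → ℝ) : ℝ := (∑ i, (x i)^2 / α i) - 1

/-- The constraint `C₂(x,y) = Σᵢ xᵢyᵢ/αᵢ`. -/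
def C2 {n : ℕ} (α : Fin n → ℝ) (p : Pt n) : ℝ := ∑ i, p.1 i * p.2 i / α i

/-- The Hamiltonian `H = ½(y₀² + y₁² + y₂² + y₃²)`. -/
def H4 (p : Pt 4) : ℝ := (1/2) * ((p.2 0)^2 + (p.2 1)^2 + (p.2 2)^2 + (p.2 3)^2)

/-- The angular momentum `J₁ = x₀y₁ − x₁y₀`. -/
def Jmom1 (p : Pt 4) : ℝ := p.1 0 * p.2 1 - p.1 1 * p.2 0

/-- The angular momentum `J₂ = x₂y₃ − x₃y₂`. -/
def Jmom2 (p : Pt 4) : ℝ := p.1 2 * p.2 3 - p.1 3 * p.2 2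
/-- The integral `G = F₂ + F₃` of the 112 case:
`G = y₂² + y₃² + (x₀y₂−x₂y₀)²/(α₂−α₀) + (x₀y₃−x₃y₀)²/(α₂−α₀)
   + (x₁y₂−x₂y₁)²/(α₂−α₁) + (x₁y₃−x₃y₁)²/(α₂−α₁)`. -/
def G112 (α₀ α₁ α₂ : ℝ) (p : Pt 4) : ℝ :=
  (p.2 2)^2 + (p.2 3)^2
  + (p.1 0 * p.2 2 - p.1 2 * p.2 0)^2 / (α₂ - α₀)
  + (p.1 0 * p.2 3 - p.1 3 * p.2 0)^2 / (α₂ - α₀)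
  + (p.1 1 * p.2 2 - p.1 2 * p.2 1)^2 / (α₂ - α₁)
  + (p.1 1 * p.2 3 - p.1 3 * p.2 1)^2 / (α₂ - α₁)

section PhaseSpace

variable {n : ℕ}

lemma fderiv_apply_eq_sum (f : Pt n → ℝ) (p v : Pt n) :
    fderiv ℝ f p v = ∑ i, (v.1 i * pdx f p i + v.2 i * pdy f p i) := by
  have hv : v = ∑ i, (v.1 i • ((Pi.single i 1, 0) : Pt n) + v.2 i • ((0, Pi.single i 1) : Pt n)) := by
    ext j <;> simp [Prod.fst_sum, Prod.snd_sum, Finset.sum_apply, Pi.single_apply]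
  conv_lhs => rw [hv, map_sum]
  simp only [map_add, map_smul, smul_eq_mul, pdx, pdy]

def canonicalBracket (f g : Pt n → ℝ) (p : Pt n) : ℝ :=
  ∑ i, (pdx f p i * pdy g p i - pdx g p i * pdy f p i)

def hamiltonianVectorField (f : Pt n → ℝ) (p : Pt n) : Pt n :=
  (fun i => pdy f p i, fun i => -pdx f p i)

lemma canonicalBracket_eq_neg_fderiv (f g : Pt n → ℝ) (p : Pt n) :
    canonicalBracket f g p = -fderiv ℝ g p (hamiltonianVectorField f p) := by
  rw [fderiv_apply_eq_sum, canonicalBracket, ← Finset.sum_neg_distrib]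
  refine Finset.sum_congr rfl fun i _ => ?_
  simp only [hamiltonianVectorField]
  ring

lemma dirac_eq (α : Fin n → ℝ) (f g : Pt n → ℝ) (p : Pt n) :
    dirac α f g p = canonicalBracket f g p
      - (fderiv ℝ f p (p.1 / α, 0) * fderiv ℝ g p (0, p.1 / α)
          - fderiv ℝ g p (p.1 / α, 0) * fderiv ℝ f p (0, p.1 / α)) / Dq α p.1
      - (fderiv ℝ f p (0, p.1 / α) * fderiv ℝ g p (0, p.2 / α)
          - fderiv ℝ f p (0, p.2 / α) * fderiv ℝ g p (0, p.1 / α)) / Dq α p.1 := by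
  have hδ : ∀ A : Fin n → Fin n → ℝ, ∀ t : Fin n → Fin n → ℝ,
      ∑ i, ∑ k, A i k * ((if i = k then (1:ℝ) else 0) - t i k)
        = ∑ i, A i i - ∑ i, ∑ k, A i k * t i k := by
    intro A t
    simp only [mul_sub, mul_ite, mul_one, mul_zero, Finset.sum_sub_distrib, Finset.sum_ite_eq,
      Finset.mem_univ, if_true]
  rw [dirac, hδ, canonicalBracket]
  simp only [fderiv_apply_eq_sum, Pi.div_apply, Pi.zero_apply, zero_mul, zero_add, add_zero,
    Finset.sum_mul_sum, ← Finset.sum_sub_distrib, Finset.sum_div]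
  refine Finset.sum_congr rfl fun i _ => ?_
  congr 1
  · congr 1
    exact Finset.sum_congr rfl fun k _ => by ring
  · exact Finset.sum_congr rfl fun k _ => by ring

lemma dirac_eq_zero_of_canonicalBracket_eq_zero {α : Fin n → ℝ} {f g : Pt n → ℝ} {p : Pt n}
    (hfg : canonicalBracket f g p = 0) (hf : fderiv ℝ f p (0, p.1 / α) = 0)
    (hg : fderiv ℝ g p (0, p.1 / α) = 0) : dirac α f g p = 0 := by
  rw [dirac_eq, hfg, hf, hg]
  ring

lemma fderiv_pos_apply (i : Fin n) (p v : Pt n) :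
    fderiv ℝ (fun q : Pt n => q.1 i) p v = v.1 i := by
  change fderiv ℝ ((ContinuousLinearMap.proj i).comp
    (ContinuousLinearMap.fst ℝ (Fin n → ℝ) (Fin n → ℝ))) p v = _
  rw [ContinuousLinearMap.fderiv]
  rfl

lemma fderiv_mom_apply (i : Fin n) (p v : Pt n) :
    fderiv ℝ (fun q : Pt n => q.2 i) p v = v.2 i := by
  change fderiv ℝ ((ContinuousLinearMap.proj i).comp
    (ContinuousLinearMap.snd ℝ (Fin n → ℝ) (Fin n → ℝ))) p v = _
  rw [ContinuousLinearMap.fderiv]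
  rfl

def angMom (i j : Fin n) (q : Pt n) : ℝ := q.1 i * q.2 j - q.1 j * q.2 i

@[fun_prop]
lemma differentiable_angMom (i j : Fin n) : Differentiable ℝ (angMom i j) := by
  unfold angMom; fun_prop

lemma fderiv_angMom_apply (i j : Fin n) (p v : Pt n) :
    fderiv ℝ (angMom i j) p v =
      v.1 i * p.2 j + p.1 i * v.2 j - (v.1 j * p.2 i + p.1 j * v.2 i) := by
  unfold angMom
  simp (disch := fun_prop) only [fderiv_fun_sub, fderiv_fun_mul, sub_apply, add_apply, smul_apply,
    smul_eq_mul, fderiv_pos_apply, fderiv_mom_apply]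
  ring

lemma fderiv_angMom_apply_mom_zero (i j : Fin n) (p : Pt n) :
    fderiv ℝ (angMom i j) p (p.2, 0) = 0 := by
  rw [fderiv_angMom_apply]
  simp only [Pi.zero_apply, mul_zero, add_zero]
  ring

end PhaseSpace

lemma Jmom2_eq_angMom : Jmom2 = angMom 2 3 := rfl

lemma G112_eq (α₀ α₁ α₂ : ℝ) : G112 α₀ α₁ α₂ = fun q =>
    q.2 2 ^ 2 + q.2 3 ^ 2 + (α₂ - α₀)⁻¹ * angMom 0 2 q ^ 2 + (α₂ - α₀)⁻¹ * angMom 0 3 q ^ 2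
      + (α₂ - α₁)⁻¹ * angMom 1 2 q ^ 2 + (α₂ - α₁)⁻¹ * angMom 1 3 q ^ 2 := by
  funext q
  simp only [G112, angMom, div_eq_inv_mul]

lemma fderiv_H4_apply (p v : Pt 4) : fderiv ℝ H4 p v = ∑ i, p.2 i * v.2 i := by
  unfold H4
  simp (disch := fun_prop) only [fderiv_fun_add, fderiv_const_mul, fderiv_fun_pow, add_apply,
    smul_apply, smul_eq_mul, fderiv_mom_apply]
  simp only [Fin.sum_univ_four]
  ring

lemma fderiv_G112_apply (α₀ α₁ α₂ : ℝ) (p v : Pt 4) :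
    fderiv ℝ (G112 α₀ α₁ α₂) p v =
      2 * p.2 2 * v.2 2 + 2 * p.2 3 * v.2 3
      + 2 * angMom 0 2 p * fderiv ℝ (angMom 0 2) p v / (α₂ - α₀)
      + 2 * angMom 0 3 p * fderiv ℝ (angMom 0 3) p v / (α₂ - α₀)
      + 2 * angMom 1 2 p * fderiv ℝ (angMom 1 2) p v / (α₂ - α₁)
      + 2 * angMom 1 3 p * fderiv ℝ (angMom 1 3) p v / (α₂ - α₁) := by
  rw [G112_eq]
  simp (disch := fun_prop) only [fderiv_fun_add, fderiv_const_mul, fderiv_fun_pow, add_apply,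
    smul_apply, smul_eq_mul, fderiv_mom_apply]
  ring

lemma hamiltonianVectorField_H4 (p : Pt 4) : hamiltonianVectorField H4 p = (p.2, 0) := by
  ext i <;> simp [hamiltonianVectorField, pdx, pdy, fderiv_H4_apply, Pi.single_apply]

lemma hamiltonianVectorField_Jmom2 (p : Pt 4) :
    hamiltonianVectorField Jmom2 p = (![0, 0, -p.1 3, p.1 2], ![0, 0, -p.2 3, p.2 2]) := by
  ext i <;> fin_cases i <;>
    simp [hamiltonianVectorField, pdx, pdy, Jmom2_eq_angMom, fderiv_angMom_apply]

lemma canonicalBracket_H4_Jmom2 (p : Pt 4) : canonicalBracket H4 Jmom2 p = 0 := by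
  rw [canonicalBracket_eq_neg_fderiv, hamiltonianVectorField_H4, Jmom2_eq_angMom,
    fderiv_angMom_apply_mom_zero, neg_zero]

lemma canonicalBracket_H4_G112 (α₀ α₁ α₂ : ℝ) (p : Pt 4) :
    canonicalBracket H4 (G112 α₀ α₁ α₂) p = 0 := by
  rw [canonicalBracket_eq_neg_fderiv, hamiltonianVectorField_H4, fderiv_G112_apply]
  simp only [fderiv_angMom_apply_mom_zero, Pi.zero_apply]
  ring

lemma canonicalBracket_Jmom2_G112 (α₀ α₁ α₂ : ℝ) (p : Pt 4) :
    canonicalBracket Jmom2 (G112 α₀ α₁ α₂) p = 0 := by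
  rw [canonicalBracket_eq_neg_fderiv, hamiltonianVectorField_Jmom2, fderiv_G112_apply]
  simp only [fderiv_angMom_apply, angMom, Matrix.cons_val, Matrix.cons_val_zero,
    Matrix.cons_val_one]
  ring

lemma fderiv_H4_apply_zero_div (α : Fin 4 → ℝ) (p : Pt 4) :
    fderiv ℝ H4 p (0, p.1 / α) = C2 α p := by
  rw [fderiv_H4_apply, C2]
  exact Finset.sum_congr rfl fun i _ => by simp only [Pi.div_apply]; ring

lemma fderiv_Jmom2_apply_zero_div (α₀ α₁ α₂ : ℝ) (p : Pt 4) :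
    fderiv ℝ Jmom2 p (0, p.1 / ![α₀, α₁, α₂, α₂]) = 0 := by
  rw [Jmom2_eq_angMom, fderiv_angMom_apply]
  simp only [Pi.zero_apply, Pi.div_apply, Matrix.cons_val]
  ring

lemma fderiv_G112_apply_zero_div {α₀ α₁ α₂ : ℝ} (h₀ : α₀ ≠ 0) (h₁ : α₁ ≠ 0) (h₂ : α₂ ≠ 0)
    (h₀₂ : α₀ ≠ α₂) (h₁₂ : α₁ ≠ α₂) (p : Pt 4) :
    fderiv ℝ (G112 α₀ α₁ α₂) p (0, p.1 / ![α₀, α₁, α₂, α₂]) =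
      2 * ((p.1 2 ^ 2 + p.1 3 ^ 2) * C2 ![α₀, α₁, α₂, α₂] p
        - (p.1 2 * p.2 2 + p.1 3 * p.2 3) * C1 ![α₀, α₁, α₂, α₂] p.1) / α₂ := by
  have h₂₀ : α₂ - α₀ ≠ 0 := sub_ne_zero.2 h₀₂.symm
  have h₂₁ : α₂ - α₁ ≠ 0 := sub_ne_zero.2 h₁₂.symm
  rw [fderiv_G112_apply]
  simp only [fderiv_angMom_apply, angMom, C1, C2, Fin.sum_univ_four, Pi.zero_apply, Pi.div_apply,
    Matrix.cons_val, Matrix.cons_val_zero, Matrix.cons_val_one]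
  field_simp
  ring

/-- on the constraint set of the 112-ellipsoid (parameters
`(α₀,α₁,α₂,α₂)`), the Dirac brackets `{H,J}`, `{H,G}`, `{J,G}` all vanish,
where `J = x₂y₃ − x₃y₂`. -/
theorem stmt9 (α₀ α₁ α₂ : ℝ) (hα₀ : 0 < α₀) (hα₀₁ : α₀ < α₁) (hα₁₂ : α₁ < α₂)
    (p : Pt 4)
    (hC1 : C1 ![α₀, α₁, α₂, α₂] p.1 = 0)
    (hC2 : C2 ![α₀, α₁, α₂, α₂] p = 0) :
    dirac ![α₀, α₁, α₂, α₂] H4 Jmom2 p = 0 ∧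
    dirac ![α₀, α₁, α₂, α₂] H4 (G112 α₀ α₁ α₂) p = 0 ∧
    dirac ![α₀, α₁, α₂, α₂] Jmom2 (G112 α₀ α₁ α₂) p = 0 := by
  have hα₁ : 0 < α₁ := hα₀.trans hα₀₁
  have hα₂ : 0 < α₂ := hα₁.trans hα₁₂
  have hH : fderiv ℝ H4 p (0, p.1 / ![α₀, α₁, α₂, α₂]) = 0 :=
    (fderiv_H4_apply_zero_div _ p).trans hC2
  have hG : fderiv ℝ (G112 α₀ α₁ α₂) p (0, p.1 / ![α₀, α₁, α₂, α₂]) = 0 :=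
    (fderiv_G112_apply_zero_div hα₀.ne' hα₁.ne' hα₂.ne' (hα₀₁.trans hα₁₂).ne hα₁₂.ne p).trans
      (by rw [hC1, hC2]; ring)
  have hJ := fderiv_Jmom2_apply_zero_div α₀ α₁ α₂ p
  exact ⟨dirac_eq_zero_of_canonicalBracket_eq_zero (canonicalBracket_H4_Jmom2 p) hH hJ,
    dirac_eq_zero_of_canonicalBracket_eq_zero (canonicalBracket_H4_G112 α₀ α₁ α₂ p) hH hG,
    dirac_eq_zero_of_canonicalBracket_eq_zero (canonicalBracket_Jmom2_G112 α₀ α₁ α₂ p) hJ hG⟩
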